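/- Let H = (X, Y) be a hypergraph with vertex set X and hyperedge set Y whose associated bipartite graph is connected, fix two distinct hyperedges y₁, y₂ ∈ Y, and let H' = (X ∪ {x*}, Y) be obtained from H by adjoining one new vertex x* incident to exactly y₁ and y₂. Then for each i ∈ {1, 2}, if f : Y → ℕ is a hypertree in H, the function f + 1_{y_i} is a hypertree in H'. -/

import Mathlib

open SimpleGraph

/-- The bipartite graph associated to a hypergraph with hyperedge set `Y`,
vertex set `X`, and incidence function `I`. -/
def bip {X Y : Type*} (I : Y → Finset X) : SimpleGraph (Y ⊕ X) :=
  SimpleGraph.fromRel fun a b =>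
    ∃ y x, a = Sum.inl y ∧ b = Sum.inr x ∧ x ∈ I y

/-- `f : Y → ℕ` is a hypertree: there is a spanning tree of `bip I` whose
degree at each `y ∈ Y` is `f y + 1`. -/
def IsHypertree {X Y : Type*} (I : Y → Finset X) (f : Y → ℕ) : Prop :=
  ∃ T : SimpleGraph (Y ⊕ X), T ≤ bip I ∧ T.IsTree ∧
    ∀ y : Y, (T.neighborSet (Sum.inl y)).ncard = f y + 1

/-- The incidence function of the hypergraph `H' = (X ∪ {x*}, Y)` obtained by
adjoining one new vertex `x* = none` incident to exactly `y₁` and `y₂`. -/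
def extInc {X Y : Type*} [DecidableEq X] [DecidableEq Y] (I : Y → Finset X)
    (y₁ y₂ : Y) : Y → Finset (Option X) :=
  fun y => (I y).map Function.Embedding.some ∪
    (if y = y₁ ∨ y = y₂ then {none} else ∅)

/-! Push a spanning tree `T` of `bip H` forward into `bip H'` and hang the new vertex `x*` on
`yᵢ` as a leaf. Since `x*` is isolated in the image of `T`, the new edge closes no cycle, so
the result is again a spanning tree, and the only hyperedge whose degree changes is `yᵢ`,
which gains exactly one neighbour. -/

namespace SimpleGraph

variable {V W : Type*} {G : SimpleGraph V}

lemma IsAcyclic.map (f : V ↪ W) (hG : G.IsAcyclic) : (G.map f).IsAcyclic := by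
  intro a c hc
  have hrange : ∀ x ∈ c.support, x ∈ Set.range f := by
    intro x hx
    obtain ⟨e, he, hxe⟩ := (Walk.mem_support_iff_exists_mem_edges_of_not_nil hc.not_nil).mp hx
    obtain ⟨e', -, rfl⟩ := (edgeSet_map f G).subset (c.edges_subset_edgeSet he)
    obtain ⟨x', -, rfl⟩ := Sym2.mem_map.mp hxe
    exact ⟨x', rfl⟩
  have hcyc : (c.induce _ hrange).IsCycle :=
    Walk.IsCycle.of_map (f := (Embedding.induce _).toHom) (by rwa [Walk.map_induce])
  exact (Embedding.map f G).isoInduceRange.isAcyclic_iff.mp hG _ hcyc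

lemma not_reachable_map_of_notMem_range (f : V ↪ W) (v : V) {w : W} (hw : w ∉ Set.range f) :
    ¬(G.map f).Reachable (f v) w := by
  rintro ⟨p⟩
  obtain ⟨d, -, -, hd⟩ := p.exists_boundary_dart (Set.range f) ⟨v, rfl⟩ hw
  obtain ⟨-, x, -, -, hx⟩ := (map_adj f G _ _).mp d.adj
  exact hd ⟨x, hx⟩

lemma IsTree.map_sup_edge (hG : G.IsTree) (f : V ↪ W) {w : W} (hf : Set.range f = {w}ᶜ)
    (v : V) : (G.map f ⊔ edge (f v) w).IsTree := by
  have hw : w ∉ Set.range f := by simp [hf]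
  refine ⟨?_, IsAcyclic.sup_edge_of_not_reachable
    (not_reachable_map_of_notMem_range f v hw) (IsAcyclic.map f hG.isAcyclic)⟩
  have hreach : ∀ x, (G.map f ⊔ edge (f v) w).Reachable (f v) x := by
    intro x
    by_cases hx : x = w
    · subst hx
      exact Adj.reachable (Or.inr (by simp [edge_adj, ← Set.mem_compl_singleton_iff, ← hf]))
    · obtain ⟨u, rfl⟩ : x ∈ Set.range f := hf ▸ hx
      exact ((hG.connected v u).map (Embedding.map f G).toHom).mono le_sup_left
  exact connected_iff_exists_forall_reachable _ |>.mpr ⟨f v, hreach⟩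

lemma ncard_neighborSet_map_sup_edge_self (f : V ↪ W) {w : W} (hw : w ∉ Set.range f) {v : V}
    (hv : (G.neighborSet v).Finite) :
    ((G.map f ⊔ edge (f v) w).neighborSet (f v)).ncard = (G.neighborSet v).ncard + 1 := by
  have hN : (G.map f ⊔ edge (f v) w).neighborSet (f v) = insert w (f '' G.neighborSet v) := by
    have : f v ≠ w := fun h => hw ⟨v, h⟩
    ext x
    simp only [mem_neighborSet, sup_adj, map_adj, edge_adj, Set.mem_insert_iff, Set.mem_image]
    grind
  rw [hN, Set.ncard_insert_of_notMem (by rintro ⟨u, -, hu⟩; exact hw ⟨u, hu⟩) (hv.image f),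
    Set.ncard_image_of_injective _ f.injective]

lemma ncard_neighborSet_map_sup_edge_of_ne (f : V ↪ W) {w : W} (hw : w ∉ Set.range f) {u v : V}
    (huv : u ≠ v) :
    ((G.map f ⊔ edge (f v) w).neighborSet (f u)).ncard = (G.neighborSet u).ncard := by
  have hN : (G.map f ⊔ edge (f v) w).neighborSet (f u) = f '' G.neighborSet u := by
    have : f u ≠ w := fun h => hw ⟨u, h⟩
    ext x
    simp [edge_adj, huv, this]
  rw [hN, Set.ncard_image_of_injective _ f.injective]

end SimpleGraph

section Hypergraph

def liftVertex (Y X : Type*) : Y ⊕ X ↪ Y ⊕ Option X :=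
  (Function.Embedding.refl Y).sumMap .some

variable {X Y : Type*}

lemma bip_adj_inl_inr (I : Y → Finset X) (y : Y) (x : X) :
    (bip I).Adj (.inl y) (.inr x) ↔ x ∈ I y := by
  simp [bip]

@[simp]
lemma liftVertex_inl (y : Y) : liftVertex Y X (.inl y) = .inl y := rfl

@[simp]
lemma liftVertex_inr (x : X) : liftVertex Y X (.inr x) = .inr (some x) := rfl

lemma range_liftVertex : Set.range (liftVertex Y X) = {.inr none}ᶜ := by
  ext (y | _ | x) <;> simp [liftVertex]

variable [DecidableEq X] [DecidableEq Y] (I : Y → Finset X) {y₁ y₂ : Y}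

lemma bip_le_comap_extInc : bip I ≤ (bip (extInc I y₁ y₂)).comap (liftVertex Y X) := by
  have hsome {y : Y} {x : X} (hx : x ∈ I y) :
      (bip (extInc I y₁ y₂)).Adj (.inl y) (.inr (some x)) :=
    (bip_adj_inl_inr _ y (some x)).mpr (by simp [extInc, hx])
  rintro a b ⟨-, ⟨y, x, rfl, rfl, hx⟩ | ⟨y, x, rfl, rfl, hx⟩⟩
  · simpa using hsome hx
  · simpa using (hsome hx).symm

lemma bip_extInc_adj_none {i : Y} (hi : i = y₁ ∨ i = y₂) :
    (bip (extInc I y₁ y₂)).Adj (.inl i) (.inr none) := by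
  simp [bip_adj_inl_inr, extInc, hi]

variable {I}

lemma IsHypertree.extInc {f : Y → ℕ} (hf : IsHypertree I f) {i : Y} (hi : i = y₁ ∨ i = y₂) :
    IsHypertree (extInc I y₁ y₂) (fun y => f y + if y = i then 1 else 0) := by
  obtain ⟨T, hTle, hT, hdeg⟩ := hf
  have hnone : Sum.inr none ∉ Set.range (liftVertex Y X) := by simp [range_liftVertex]
  refine ⟨T.map (liftVertex Y X) ⊔ edge (.inl i) (.inr none), ?_,
    hT.map_sup_edge _ range_liftVertex (.inl i), fun y => ?_⟩
  · exact sup_le ((map_le_iff_le_comap _ _ _).mpr (hTle.trans (bip_le_comap_extInc I)))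
      ((edge_le_iff _).mpr (.inr (bip_extInc_adj_none I hi)))
  · have hfin : (T.neighborSet (.inl y)).Finite := Set.finite_of_ncard_ne_zero (by simp [hdeg])
    beta_reduce
    by_cases hyi : y = i
    · subst hyi
      rw [if_pos rfl, ← hdeg]
      simpa only [liftVertex_inl] using
        ncard_neighborSet_map_sup_edge_self (liftVertex Y X) hnone hfin
    · rw [if_neg hyi, add_zero, ← hdeg]
      simpa only [liftVertex_inl] using
        ncard_neighborSet_map_sup_edge_of_ne (liftVertex Y X) hnone (Sum.inl_injective.ne hyi)

end Hypergraph

theorem extInc_hypertree_general {X Y : Type*}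
    [DecidableEq X] [DecidableEq Y] (I : Y → Finset X)
    (y₁ y₂ : Y) (f : Y → ℕ) (hf : IsHypertree I f) :
    IsHypertree (extInc I y₁ y₂) (fun y => f y + if y = y₁ then 1 else 0) ∧
    IsHypertree (extInc I y₁ y₂) (fun y => f y + if y = y₂ then 1 else 0) :=
  ⟨hf.extInc (.inl rfl), hf.extInc (.inr rfl)⟩

/-- If `f` is a hypertree of `H`, then both `f + 1_{y₁}` and `f + 1_{y₂}` are
hypertrees of `H'`. -/
theorem extInc_hypertree {X Y : Type*} [Fintype X] [Fintype Y]
    [DecidableEq X] [DecidableEq Y] (I : Y → Finset X)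
    (hne : ∀ y, (I y).Nonempty) (hconn : (bip I).Connected)
    (y₁ y₂ : Y) (hy : y₁ ≠ y₂) (f : Y → ℕ) (hf : IsHypertree I f) :
    IsHypertree (extInc I y₁ y₂) (fun y => f y + if y = y₁ then 1 else 0) ∧
    IsHypertree (extInc I y₁ y₂) (fun y => f y + if y = y₂ then 1 else 0) :=
  extInc_hypertree_general I y₁ y₂ f hf
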